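/- arXiv:1603.08097 — 3 statements merged into one kernel-verified Lean document; each statement's English description precedes it below -/
import Mathlib

section
/- Theorem 1. Let λ be a real number and let j, k, p be natural numbers with j ≥ 1 and 4jp + 2k ≥ 2j + 1. Then the series ∑_{r=p}^∞ arctan( λ·F_{2j}·L_{4jr+2k} / (F_{4jr+2k}² − F_{2j}² + λ²) ) converges and its sum equals arctan( λ / F_{4jp+2k−2j} ). -/
/-!
Put `m = 4jp + 2k - 2j` and `d = 2j`, both even. Binet's formula turns
`F_{m+2d} - F_m = F_d L_{m+d}` and `F_m F_{m+2d} = F_{m+d}² - F_d²` into polynomial identities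
in `φ^m, ψ^m, φ^d, ψ^d`, the parities entering through `(φψ)^n = (-1)^n`. With the subtraction
formula for `arctan`, the `r`-th term becomes `arctan (λ / F_{m+4jr}) - arctan (λ / F_{m+4j(r+1)})`,
so the series telescopes to `arctan (λ / F_m)`. The terms all have the sign of `λ`, which is what
makes the convergence unconditional, as `HasSum` requires.
-/

def lucas : ℕ → ℕ
  | 0 => 2
  | 1 => 1
  | n + 2 => lucas (n + 1) + lucas n

open Real Filter Topology goldenRatio

theorem coe_lucas_eq (n : ℕ) : (lucas n : ℝ) = φ ^ n + ψ ^ n := by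
  induction n using Nat.twoStepInduction with
  | zero => norm_num [lucas]
  | one => simp [lucas, goldenRatio_add_goldenConj]
  | more n ih₀ ih₁ =>
    rw [lucas, Nat.cast_add, ih₀, ih₁]
    linear_combination (-φ ^ n) * goldenRatio_sq - ψ ^ n * goldenConj_sq

theorem fib_add_two_mul_sub_fib {d : ℕ} (hd : Even d) (m : ℕ) :
    (Nat.fib (m + 2 * d) : ℝ) - Nat.fib m = Nat.fib d * lucas (m + d) := by
  have hψφ : ψ ^ d * φ ^ d = 1 := by rw [← mul_pow, goldenConj_mul_goldenRatio, hd.neg_one_pow]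
  simp only [coe_fib_eq, coe_lucas_eq, two_mul, pow_add]
  linear_combination (φ ^ m - ψ ^ m) / √5 * hψφ

theorem fib_mul_fib_add_two_mul {m : ℕ} (hm : Even m) (d : ℕ) :
    (Nat.fib m : ℝ) * Nat.fib (m + 2 * d) = Nat.fib (m + d) ^ 2 - Nat.fib d ^ 2 := by
  have hφψ : φ ^ m * ψ ^ m = 1 := by rw [← mul_pow, goldenRatio_mul_goldenConj, hm.neg_one_pow]
  simp only [coe_fib_eq, two_mul, pow_add]
  linear_combination -(φ ^ d - ψ ^ d) ^ 2 / √5 ^ 2 * hφψ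

theorem arctan_div_sub_arctan_div {a b : ℝ} (ha : 0 < a) (hb : 0 < b) (x : ℝ) :
    arctan (x / a) - arctan (x / b) = arctan (x * (b - a) / (a * b + x ^ 2)) := by
  have hprod : x / a * -(x / b) < 1 := by
    have : 0 ≤ x / a * (x / b) := by rw [div_mul_div_comm, ← sq]; positivity
    linarith
  rw [sub_eq_add_neg, ← arctan_neg, arctan_add hprod]
  congr 1
  have h1 : 1 - x / a * -(x / b) = (a * b + x ^ 2) / (a * b) := by field_simp; ring
  rw [h1]
  field_simp
  ring

theorem Antitone.hasSum_sub_succ {g : ℕ → ℝ} {l : ℝ} (hg : Antitone g)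
    (hl : Tendsto g atTop (𝓝 l)) : HasSum (fun n ↦ g n - g (n + 1)) (g 0 - l) := by
  refine (hasSum_iff_tendsto_nat_of_nonneg (fun n ↦ sub_nonneg.2 (hg n.le_succ)) _).2 ?_
  simp only [Finset.sum_range_sub']
  exact hl.const_sub (g 0)

theorem Monotone.hasSum_sub_succ {g : ℕ → ℝ} {l : ℝ} (hg : Monotone g)
    (hl : Tendsto g atTop (𝓝 l)) : HasSum (fun n ↦ g n - g (n + 1)) (g 0 - l) := by
  simpa only [Pi.neg_apply, neg_sub_neg, neg_sub] using (hg.neg.hasSum_sub_succ hl.neg).neg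

theorem hasSum_arctan_div_sub_arctan_div {a : ℕ → ℝ} (ha₀ : ∀ n, 0 < a n) (ha : Monotone a)
    (ha_top : Tendsto a atTop atTop) (x : ℝ) :
    HasSum (fun n ↦ arctan (x / a n) - arctan (x / a (n + 1))) (arctan (x / a 0)) := by
  have hl : Tendsto (fun n ↦ arctan (x / a n)) atTop (𝓝 0) := by
    simpa [Function.comp_def] using
      (continuous_arctan.tendsto 0).comp (tendsto_const_nhds.div_atTop ha_top)
  rw [← sub_zero (arctan (x / a 0))]
  rcases le_total 0 x with hx | hx
  · refine Antitone.hasSum_sub_succ (fun n n' hnn' ↦ ?_) hl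
    exact arctan_strictMono.monotone (div_le_div_of_nonneg_left hx (ha₀ n) (ha hnn'))
  · refine Monotone.hasSum_sub_succ (fun n n' hnn' ↦ ?_) hl
    refine arctan_strictMono.monotone ?_
    simpa only [neg_div, neg_le_neg_iff] using
      div_le_div_of_nonneg_left (neg_nonneg.2 hx) (ha₀ n) (ha hnn')

theorem tendsto_fib_atTop : Tendsto Nat.fib atTop atTop :=
  (tendsto_add_atTop_iff_nat 2).1 Nat.fib_add_two_strictMono.tendsto_atTop

theorem arctan_fib_lucas_eq_sub {m d : ℕ} (hm₀ : 0 < m) (hm : Even m) (hd : Even d) (x : ℝ) :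
    arctan (x * Nat.fib d * lucas (m + d) / (Nat.fib (m + d) ^ 2 - Nat.fib d ^ 2 + x ^ 2)) =
      arctan (x / Nat.fib m) - arctan (x / Nat.fib (m + 2 * d)) := by
  rw [arctan_div_sub_arctan_div (by exact_mod_cast Nat.fib_pos.2 hm₀)
    (by exact_mod_cast Nat.fib_pos.2 (by omega)), fib_add_two_mul_sub_fib hd,
    fib_mul_fib_add_two_mul hm, mul_assoc]

theorem theorem1 (lam : ℝ) (j k p : ℕ) (hj : 1 ≤ j)
    (h : 2 * j + 1 ≤ 4 * j * p + 2 * k) :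
    HasSum (fun r : ℕ =>
        Real.arctan (lam * (Nat.fib (2 * j) : ℝ) * (lucas (4 * j * (p + r) + 2 * k) : ℝ) /
          ((Nat.fib (4 * j * (p + r) + 2 * k) : ℝ) ^ 2 - (Nat.fib (2 * j) : ℝ) ^ 2 + lam ^ 2)))
      (Real.arctan (lam / (Nat.fib (4 * j * p + 2 * k - 2 * j) : ℝ))) := by
  set m := 4 * j * p + 2 * k - 2 * j with hm_def
  have hm : Even m :=
    ⟨2 * j * p + k - j, by rw [hm_def, show 4 * j * p = 2 * (2 * j * p) by ring]; omega⟩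
  have hidx : ∀ r, 4 * j * (p + r) + 2 * k = m + 4 * j * r + 2 * j := by
    intro r; rw [mul_add]; omega
  have hstep : ∀ r, m + 4 * j * r + 2 * (2 * j) = m + 4 * j * (r + 1) := fun r ↦ by ring
  have htelescope := hasSum_arctan_div_sub_arctan_div (a := fun r ↦ (Nat.fib (m + 4 * j * r) : ℝ))
    (fun r ↦ by exact_mod_cast Nat.fib_pos.2 (by omega))
    (Nat.mono_cast.comp (Nat.fib_mono.comp fun r r' hrr' ↦ by gcongr))
    (tendsto_natCast_atTop_atTop.comp (tendsto_fib_atTop.comp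
      (tendsto_atTop_mono (fun r ↦ show r ≤ m + 4 * j * r by nlinarith) tendsto_id))) lam
  simp only [mul_zero, add_zero] at htelescope
  convert htelescope using 2 with r
  rw [hidx, arctan_fib_lucas_eq_sub (by omega) (hm.add ⟨2 * j * r, by ring⟩) (by simp), hstep]
end

section
/- For every natural number k ≥ 1, the series ∑_{r=1}^∞ arctan( 1 / F_{2r+2k−1} ) converges and its sum equals arctan( 1 / F_{2k} ). (The case k = 1 is Lehmer's classical formula ∑_{r=1}^∞ arctan(1/F_{2r+1}) = arctan(1/F_2) = π/4.) -/
/-!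
Cassini's identity at an odd index, `F_{2n} F_{2n+2} + 1 = F_{2n+1}²`, together with
`F_{2n+2} - F_{2n} = F_{2n+1}` and the subtraction formula for `arctan`, gives
`arctan (1/F_{2n+1}) = arctan (1/F_{2n}) - arctan (1/F_{2n+2})` for `n ≥ 1`. The series therefore
telescopes, and its tail `arctan (1/F_{2(r+k)})` tends to `0`.
-/

open Real Filter Finset Topology

-- `HasSum` is unconditional: the partial sums telescope, and monotonicity makes the terms
-- nonnegative so that their convergence suffices.
theorem hasSum_sub_succ_of_antitone {f : ℕ → ℝ} {l : ℝ} (hf : Antitone f)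
    (hl : Tendsto f atTop (𝓝 l)) : HasSum (fun n ↦ f n - f (n + 1)) (f 0 - l) := by
  rw [hasSum_iff_tendsto_nat_of_nonneg fun n ↦ sub_nonneg.2 (hf n.le_succ)]
  simpa only [sum_range_sub'] using hl.const_sub (f 0)

theorem arctan_one_div_sub_arctan_one_div {a b : ℝ} (ha : 0 < a) (hb : 0 < b) :
    arctan (1 / a) - arctan (1 / b) = arctan ((b - a) / (a * b + 1)) := by
  rw [sub_eq_add_neg, ← arctan_neg,
    arctan_add (by nlinarith [div_pos one_pos ha, div_pos one_pos hb])]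
  congr 1
  simp only [mul_neg, sub_neg_eq_add, ← sub_eq_add_neg]
  field_simp

theorem tendsto_arctan_one_div_atTop : Tendsto (fun x : ℝ ↦ arctan (1 / x)) atTop (𝓝 0) := by
  simp only [one_div]
  rw [← arctan_zero]
  exact (continuous_arctan.tendsto 0).comp tendsto_inv_atTop_zero

namespace Nat

theorem tendsto_fib_atTop : Tendsto fib atTop atTop :=
  tendsto_atTop_mono' atTop ((eventually_ge_atTop 5).mono fun _ ↦ le_fib_self) tendsto_id

theorem fib_two_mul_mul_fib_two_mul_add_two (n : ℕ) :
    (fib (2 * n) : ℤ) * fib (2 * n + 2) + 1 = fib (2 * n + 1) ^ 2 := by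
  have cassini := Int.fib_succ_mul_fib_pred_sub_fib_sq (2 * n + 1 : ℕ)
  rw [Int.natAbs_natCast, Odd.neg_one_pow ⟨n, rfl⟩] at cassini
  simp only [← Int.fib_natCast] at cassini ⊢
  push_cast at cassini ⊢
  ring_nf at cassini ⊢
  linarith

theorem arctan_one_div_fib_two_mul_add_one {n : ℕ} (hn : 0 < n) :
    arctan (1 / fib (2 * n + 1)) = arctan (1 / fib (2 * n)) - arctan (1 / fib (2 * n + 2)) := by
  have hpos (m : ℕ) (hm : 0 < m) : (0 : ℝ) < fib m := by exact_mod_cast fib_pos.2 hm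
  have hdiff : (fib (2 * n + 2) : ℝ) - fib (2 * n) = fib (2 * n + 1) := by
    rw [fib_add_two]; push_cast; ring
  have hcassini : (fib (2 * n) : ℝ) * fib (2 * n + 2) + 1 = fib (2 * n + 1) ^ 2 := by
    exact_mod_cast fib_two_mul_mul_fib_two_mul_add_two n
  rw [arctan_one_div_sub_arctan_one_div (hpos _ (by omega)) (hpos _ (by omega)), hdiff, hcassini]
  field_simp [(hpos (2 * n + 1) (by omega)).ne']

end Nat

theorem stmt14 (k : ℕ) (hk : 1 ≤ k) :
    HasSum (fun r : ℕ =>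
        Real.arctan (1 / (Nat.fib (2 * (1 + r) + 2 * k - 1) : ℝ)))
      (Real.arctan (1 / (Nat.fib (2 * k) : ℝ))) := by
  set f : ℕ → ℝ := fun r ↦ arctan (1 / Nat.fib (2 * (r + k)))
  have hterm (r : ℕ) : arctan (1 / Nat.fib (2 * (1 + r) + 2 * k - 1)) = f r - f (r + 1) := by
    rw [show 2 * (1 + r) + 2 * k - 1 = 2 * (r + k) + 1 by omega,
      Nat.arctan_one_div_fib_two_mul_add_one (by omega)]
    simp only [f, show 2 * (r + 1 + k) = 2 * (r + k) + 2 by ring]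
  have hf : Antitone f := antitone_nat_of_succ_le fun r ↦ by
    rw [← sub_nonneg, ← hterm]
    exact arctan_nonneg.2 (by positivity)
  have hlim : Tendsto f atTop (𝓝 0) :=
    tendsto_arctan_one_div_atTop.comp <| tendsto_natCast_atTop_atTop.comp <|
      Nat.tendsto_fib_atTop.comp <|
        tendsto_atTop_mono (fun r ↦ show r ≤ 2 * (r + k) by omega) tendsto_id
  convert hasSum_sub_succ_of_antitone hf hlim using 1
  · exact funext hterm
  · simp [f]
end

section
/- For every natural number j ≥ 1, the series ∑_{r=1}^∞ arctan( √(5·L_{4j−2})·L_{2j−1}·F_{(4j−2)r−2j+1} / L_{2((4j−2)r−2j+1)} ) converges and its sum equals π/2. -/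
open Real Filter goldenRatio

namespace Real

lemma arctan_sub_arctan {u v : ℝ} (h : 0 < 1 + u * v) :
    arctan v - arctan u = arctan ((v - u) / (1 + u * v)) := by
  have hlt : v * -u < 1 := by linarith
  rw [sub_eq_add_neg, ← arctan_neg, arctan_add hlt]
  congr 2
  ring

lemma hasSum_arctan_sub_of_monotone {w : ℕ → ℝ} (hmono : Monotone w)
    (hw : Tendsto w atTop atTop) :
    HasSum (fun r => arctan (w (r + 1)) - arctan (w r)) (π / 2 - arctan (w 0)) := by
  rw [hasSum_iff_tendsto_nat_of_nonneg
    fun r => sub_nonneg.2 (arctan_strictMono.monotone (hmono r.le_succ))]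
  simp_rw [Finset.sum_range_sub (fun k => arctan (w k))]
  exact ((tendsto_arctan_atTop.mono_right nhdsWithin_le_nhds).comp hw).sub_const _

lemma arctan_sub_arctan_sub_inv_div {x u c : ℝ} (hx : 0 < x) (hu : 0 < u) (hc : 0 < c)
    (hc2 : c ^ 2 = x ^ 2 + (x ^ 2)⁻¹) :
    arctan ((u * x ^ 2 - (u * x ^ 2)⁻¹) / c) - arctan ((u - u⁻¹) / c) =
      arctan (c * (x - x⁻¹) * (u * x + (u * x)⁻¹) / ((u * x) ^ 2 + ((u * x) ^ 2)⁻¹)) := by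
  have hden : 1 + (u - u⁻¹) / c * ((u * x ^ 2 - (u * x ^ 2)⁻¹) / c) =
      ((u * x) ^ 2 + ((u * x) ^ 2)⁻¹) / c ^ 2 := by
    field_simp
    rw [hc2]
    field_simp
    ring
  have hpos : 0 < ((u * x) ^ 2 + ((u * x) ^ 2)⁻¹) / c ^ 2 := by positivity
  rw [arctan_sub_arctan (hden ▸ hpos), hden]
  congr 1
  field_simp
  ring

end Real

lemma tendsto_sub_inv_atTop : Tendsto (fun t : ℝ => t - t⁻¹) atTop atTop := by
  simpa [sub_eq_add_neg] using tendsto_id.atTop_add tendsto_inv_atTop_zero.neg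

lemma sub_inv_le_sub_inv {s t : ℝ} (hs : 0 < s) (hst : s ≤ t) : s - s⁻¹ ≤ t - t⁻¹ :=
  sub_le_sub hst (inv_anti₀ hs hst)

lemma hasSum_arctan_of_one_lt {x : ℝ} (hx : 1 < x) :
    HasSum (fun r : ℕ => arctan (√(x ^ 2 + (x ^ 2)⁻¹) * (x - x⁻¹) *
        (x ^ (2 * r + 1) + (x ^ (2 * r + 1))⁻¹) /
          ((x ^ (2 * r + 1)) ^ 2 + ((x ^ (2 * r + 1)) ^ 2)⁻¹))) (π / 2) := by
  have hx0 : 0 < x := by linarith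
  set c := √(x ^ 2 + (x ^ 2)⁻¹)
  have hc : 0 < c := sqrt_pos.2 (by positivity)
  have hc2 : c ^ 2 = x ^ 2 + (x ^ 2)⁻¹ := sq_sqrt (by positivity)
  set w : ℕ → ℝ := fun k => ((x ^ 2) ^ k - ((x ^ 2) ^ k)⁻¹) / c
  have hpow_mono : Monotone fun k : ℕ => (x ^ 2) ^ k := pow_right_mono₀ (one_le_pow₀ hx.le)
  have hw_mono : Monotone w := fun k l hkl =>
    div_le_div_of_nonneg_right (sub_inv_le_sub_inv (by positivity) (hpow_mono hkl)) hc.le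
  have hw_lim : Tendsto w atTop atTop :=
    (tendsto_sub_inv_atTop.comp
      (tendsto_pow_atTop_atTop_of_one_lt (one_lt_pow₀ hx two_ne_zero))).atTop_div_const hc
  convert hasSum_arctan_sub_of_monotone hw_mono hw_lim using 1
  · funext r
    rw [pow_succ x (2 * r), pow_mul,
      ← arctan_sub_arctan_sub_inv_div hx0 (pow_pos (pow_pos hx0 2) r) hc hc2, ← pow_succ]
  · simp [w]

lemma goldenConj_pow_of_odd {m : ℕ} (hm : Odd m) : ψ ^ m = -(φ ^ m)⁻¹ := by
  rw [← neg_neg ψ, ← inv_goldenRatio, hm.neg_pow, inv_pow]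

lemma goldenConj_pow_two_mul (m : ℕ) : ψ ^ (2 * m) = ((φ ^ m) ^ 2)⁻¹ := by
  rw [← neg_neg ψ, ← inv_goldenRatio, (even_two_mul m).neg_pow, inv_pow, pow_mul']

lemma lucas_eq_goldenRatio_pow_add_goldenConj_pow : ∀ n : ℕ, (lucas n : ℝ) = φ ^ n + ψ ^ n
  | 0 => by norm_num [lucas]
  | 1 => by norm_num [lucas]
  | n + 2 => by
    rw [lucas, Nat.cast_add, lucas_eq_goldenRatio_pow_add_goldenConj_pow (n + 1),
      lucas_eq_goldenRatio_pow_add_goldenConj_pow n]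
    linear_combination (-(φ ^ n)) * goldenRatio_sq + (-(ψ ^ n)) * goldenConj_sq

lemma lucas_two_mul (m : ℕ) : (lucas (2 * m) : ℝ) = (φ ^ m) ^ 2 + ((φ ^ m) ^ 2)⁻¹ := by
  rw [lucas_eq_goldenRatio_pow_add_goldenConj_pow, goldenConj_pow_two_mul, pow_mul']

lemma lucas_of_odd {m : ℕ} (hm : Odd m) : (lucas m : ℝ) = φ ^ m - (φ ^ m)⁻¹ := by
  rw [lucas_eq_goldenRatio_pow_add_goldenConj_pow, goldenConj_pow_of_odd hm, sub_eq_add_neg]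

lemma fib_of_odd {m : ℕ} (hm : Odd m) : (Nat.fib m : ℝ) = (φ ^ m + (φ ^ m)⁻¹) / √5 := by
  rw [coe_fib_eq, goldenConj_pow_of_odd hm, sub_neg_eq_add]

theorem stmt16 (j : ℕ) (hj : 1 ≤ j) :
    HasSum (fun r : ℕ =>
        Real.arctan (Real.sqrt (5 * (lucas (4 * j - 2) : ℝ)) * (lucas (2 * j - 1) : ℝ) *
            (Nat.fib ((4 * j - 2) * (1 + r) + 1 - 2 * j) : ℝ) /
          (lucas (2 * ((4 * j - 2) * (1 + r) + 1 - 2 * j)) : ℝ)))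
      (Real.pi / 2) := by
  set a := 2 * j - 1
  have ha : Odd a := ⟨j - 1, by omega⟩
  have hx : 1 < φ ^ a := one_lt_pow₀ one_lt_goldenRatio (by omega)
  have hindex : ∀ r : ℕ, (4 * j - 2) * (1 + r) + 1 - 2 * j = a * (2 * r + 1) := fun r => by
    have : (4 * j - 2) * (1 + r) = a * (2 * r + 1) + a := by
      rw [show 4 * j - 2 = 2 * a by omega]; ring
    omega
  convert hasSum_arctan_of_one_lt hx using 2 with r
  have hodd : Odd (a * (2 * r + 1)) := ha.mul (odd_two_mul_add_one r)
  rw [hindex, show 4 * j - 2 = 2 * a by omega, lucas_two_mul, lucas_two_mul, lucas_of_odd ha,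
    fib_of_odd hodd, sqrt_mul (by norm_num), pow_mul]
  field_simp
end
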